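/- Let Γ ⊂ ℝⁿ be an open, convex, symmetric cone with vertex at the origin satisfying Γₙ⁺ ⊆ Γ ⊆ Γ₁⁺ and Γ ≠ Γ₁⁺. For t ∈ [0,1) define λᵗ = tλ + (1−t)σ₁(λ)e where e = (1,…,1), and Γᵗ = {λ ∈ ℝⁿ : λᵗ ∈ Γ}. Then ∂Γᵗ ∩ Γ̄ = {0}, i.e. the only point lying both on the boundary of Γᵗ and in the closure of Γ is the origin. -/

import Mathlib

/-!
The closure `C` of `Γ` is a convex cone invariant under permutations of the coordinates. If it met
the hyperplane `σ₁ = 0` in some `x ≠ 0`, then the cyclic shifts of `x`, which sum to `0`, would give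
`-x ∈ C`; so `C ∩ {σ₁ = 0}` would be a nonzero permutation-invariant linear subspace. It contains
`x - x ∘ (i j) = (xᵢ - xⱼ)(eᵢ - eⱼ)`, hence every `eₐ - eⱼ`, hence the whole hyperplane, and then
`Γ₁⁺ ⊆ C + Γ ⊆ Γ`. Hence `σ₁ > 0` on `C \ {0}`, where therefore `λᵗ = tλ + (1-t)σ₁(λ)e ∈ C + Γ ⊆ Γ`:
the open set `Γᵗ` contains `C \ {0}`, but not `0`.
-/

open Finset

/-- The `k`-th elementary symmetric polynomial of `x : Fin n → ℝ`. -/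
noncomputable def esymm (n k : ℕ) (x : Fin n → ℝ) : ℝ :=
  ∑ s ∈ Finset.powersetCard k (Finset.univ : Finset (Fin n)), ∏ i ∈ s, x i

/-- The Gårding cone `Γₖ⁺ = {λ : σⱼ(λ) > 0 for all 1 ≤ j ≤ k}`. -/
def GammaK (n k : ℕ) : Set (Fin n → ℝ) :=
  {x | ∀ j, 1 ≤ j → j ≤ k → 0 < esymm n j x}

/-- The transformation `λ ↦ λ^τ = τλ + (1-τ)σ₁(λ)e`. -/
def lamT (n : ℕ) (τ : ℝ) (x : Fin n → ℝ) : Fin n → ℝ :=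
  fun i => τ * x i + (1 - τ) * ∑ j, x j

lemma mem_GammaK_one {n : ℕ} {x : Fin n → ℝ} : x ∈ GammaK n 1 ↔ 0 < ∑ i, x i := by
  have : esymm n 1 x = ∑ i, x i := by simp [esymm, powersetCard_one]
  exact ⟨fun h => this ▸ h 1 le_rfl le_rfl, fun h j h1 h2 => le_antisymm h2 h1 ▸ this ▸ h⟩

lemma one_mem_GammaK {n k : ℕ} (hk : k ≤ n) : (1 : Fin n → ℝ) ∈ GammaK n k := by
  intro j _ hj
  simpa [esymm, card_powersetCard] using Nat.choose_pos (hj.trans hk)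

lemma lamT_eq (n : ℕ) (t : ℝ) (x : Fin n → ℝ) :
    lamT n t x = t • x + ((1 - t) * ∑ i, x i) • (1 : Fin n → ℝ) := by
  funext i
  simp [lamT]

lemma continuous_lamT (n : ℕ) (t : ℝ) : Continuous (lamT n t) := by
  rw [funext (lamT_eq n t)]
  fun_prop

section ConvexCone

variable {E : Type*} [AddCommGroup E] [Module ℝ E] [TopologicalSpace E] [ContinuousSMul ℝ E]
  {Γ : Set E}

def Convex.toConvexCone (hconv : Convex ℝ Γ) (hcone : ∀ s : ℝ, 0 < s → ∀ x ∈ Γ, s • x ∈ Γ) :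
    ConvexCone ℝ E where
  carrier := Γ
  smul_mem' c hc x hx := hcone c hc x hx
  add_mem' x hx y hy := by
    convert hcone 2 two_pos _ (hconv hx hy (a := 1 / 2) (b := 1 / 2) (by norm_num) (by norm_num)
      (by norm_num)) using 1
    module

lemma zero_mem_closure_of_smul_mem (hcone : ∀ s : ℝ, 0 < s → ∀ x ∈ Γ, s • x ∈ Γ)
    (hΓ : Γ.Nonempty) : (0 : E) ∈ closure Γ := by
  obtain ⟨x, hx⟩ := hΓ
  have h : Filter.Tendsto (fun c : ℝ => c • x) (nhdsWithin 0 (Set.Ioi 0)) (nhds 0) := by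
    rw [← zero_smul ℝ x]
    exact ((continuous_id.smul continuous_const).tendsto 0).mono_left nhdsWithin_le_nhds
  exact mem_closure_of_tendsto h (eventually_nhdsWithin_of_forall fun c hc => hcone c hc x hx)

lemma IsOpen.add_mem_of_mem_closure [IsTopologicalAddGroup E] (hopen : IsOpen Γ)
    (hconv : Convex ℝ Γ) (hcone : ∀ s : ℝ, 0 < s → ∀ x ∈ Γ, s • x ∈ Γ) {x y : E}
    (hx : x ∈ closure Γ) (hy : y ∈ Γ) : x + y ∈ Γ := by
  have h := hconv.combo_closure_interior_mem_interior hx (hopen.interior_eq.symm ▸ hy)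
    (a := (1 / 2 : ℝ)) (b := 1 / 2) (by norm_num) (by norm_num) (by norm_num)
  rw [hopen.interior_eq] at h
  convert hcone 2 two_pos _ h using 1
  module

end ConvexCone

section Coordinates

variable {ι : Type*}

lemma exists_apply_ne_of_sum_eq_zero [Fintype ι] {x : ι → ℝ} (hx0 : x ≠ 0)
    (hsum : ∑ i, x i = 0) : ∃ i j, x i ≠ x j := by
  by_contra! h
  obtain ⟨i, hi⟩ := Function.ne_iff.1 hx0
  have : Nonempty ι := ⟨i⟩
  have hcard : (Fintype.card ι : ℝ) ≠ 0 := Nat.cast_ne_zero.2 Fintype.card_ne_zero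
  rw [sum_congr rfl fun j _ => h j i, sum_const, nsmul_eq_mul] at hsum
  exact hi (by simpa [hcard] using hsum)

variable [DecidableEq ι]

lemma sub_comp_swap (x : ι → ℝ) (i j : ι) :
    x - x ∘ Equiv.swap i j = (x i - x j) • (Pi.single i 1 - Pi.single j 1) := by
  funext k
  rcases eq_or_ne k i with rfl | hki
  · rcases eq_or_ne k j with rfl | hkj <;> simp [*]
  · rcases eq_or_ne k j with rfl | hkj
    · simp [hki]
    · simp [hki, hkj, Equiv.swap_apply_of_ne_of_ne]

lemma single_sub_single_comp_swap {i j : ι} (a : ι) (hi : j ≠ i) (ha : j ≠ a) :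
    (Pi.single i 1 - Pi.single j 1 : ι → ℝ) ∘ Equiv.swap i a = Pi.single a 1 - Pi.single j 1 := by
  funext k
  simp only [Function.comp_apply, Pi.sub_apply, Pi.single_apply, Equiv.swap_apply_def]
  split_ifs <;> simp_all

lemma sum_smul_single_sub_single [Fintype ι] {y : ι → ℝ} (hy : ∑ i, y i = 0) (j : ι) :
    ∑ a, y a • (Pi.single a 1 - Pi.single j 1 : ι → ℝ) = y := by
  simp only [smul_sub, sum_sub_distrib, ← sum_smul, hy, zero_smul, sub_zero]
  funext k
  simp [Finset.sum_apply, Pi.single_apply]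

end Coordinates

lemma sum_comp_addRight {n : ℕ} [NeZero n] (x : Fin n → ℝ) :
    ∑ k, x ∘ Equiv.addRight k = fun _ => ∑ i, x i := by
  funext i
  rw [Finset.sum_apply]
  exact Fintype.sum_equiv (Equiv.addLeft i) _ _ fun _ => rfl

namespace PointedCone

variable {n : ℕ} {C : PointedCone ℝ (Fin n → ℝ)}

lemma neg_mem_of_sum_eq_zero [NeZero n] (hperm : ∀ σ : Equiv.Perm (Fin n), ∀ x ∈ C, x ∘ σ ∈ C)
    {x : Fin n → ℝ} (hx : x ∈ C) (hsum : ∑ i, x i = 0) : -x ∈ C := by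
  have h := add_sum_erase univ (fun k => x ∘ Equiv.addRight k) (mem_univ 0)
  have h0 : x ∘ Equiv.addRight 0 = x := by funext; simp
  rw [sum_comp_addRight, hsum, h0] at h
  rw [neg_eq_of_add_eq_zero_right h]
  exact C.sum_mem fun k _ => hperm _ x hx

lemma mem_of_sum_eq_zero (hperm : ∀ σ : Equiv.Perm (Fin n), ∀ x ∈ C, x ∘ σ ∈ C)
    {x : Fin n → ℝ} (hx : x ∈ C) (hx0 : x ≠ 0) (hsum : ∑ i, x i = 0)
    {y : Fin n → ℝ} (hy : ∑ i, y i = 0) : y ∈ C := by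
  have : NeZero n := ⟨by rintro rfl; exact hx0 (Subsingleton.elim _ _)⟩
  have hlineal : x ∈ C.lineal := ⟨hx, neg_mem_of_sum_eq_zero hperm hx hsum⟩
  have hperm' : ∀ σ : Equiv.Perm (Fin n), ∀ z ∈ C.lineal, z ∘ σ ∈ C.lineal :=
    fun σ z hz => ⟨hperm σ z hz.1, hperm σ (-z) hz.2⟩
  obtain ⟨i, j, hij⟩ := exists_apply_ne_of_sum_eq_zero hx0 hsum
  have hij_mem : Pi.single i 1 - Pi.single j 1 ∈ C.lineal := by
    have h := C.lineal.sub_mem hlineal (hperm' (Equiv.swap i j) x hlineal)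
    rwa [sub_comp_swap, Submodule.smul_mem_iff _ (sub_ne_zero.2 hij)] at h
  have hdiff_mem : ∀ a, Pi.single a 1 - Pi.single j 1 ∈ C.lineal := by
    intro a
    rcases eq_or_ne j a with rfl | hja
    · simp
    · rw [← single_sub_single_comp_swap a (fun h => hij (congrArg x h.symm)) hja]
      exact hperm' _ _ hij_mem
  rw [← sum_smul_single_sub_single hy j]
  exact C.lineal_le (C.lineal.sum_mem fun a _ => C.lineal.smul_mem (y a) (hdiff_mem a))

end PointedCone

lemma GammaK_one_subset_of_hyperplane_subset_closure {n : ℕ} {Γ : Set (Fin n → ℝ)}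
    (hopen : IsOpen Γ) (hconv : Convex ℝ Γ) (hcone : ∀ s : ℝ, 0 < s → ∀ x ∈ Γ, s • x ∈ Γ)
    (h1 : (1 : Fin n → ℝ) ∈ Γ) (hH : ∀ y : Fin n → ℝ, ∑ i, y i = 0 → y ∈ closure Γ) :
    GammaK n 1 ⊆ Γ := by
  intro y hy
  rw [mem_GammaK_one] at hy
  have hn : (n : ℝ) ≠ 0 := by
    rintro h
    obtain rfl : n = 0 := by exact_mod_cast h
    simp at hy
  set s := (∑ i, y i) / n
  have hs : 0 < s := div_pos hy (by positivity)
  have hdiff : ∑ i, (y - s • 1) i = 0 := by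
    simp only [Pi.sub_apply, Pi.smul_apply, Pi.one_apply, smul_eq_mul, mul_one,
      sum_sub_distrib, sum_const, card_univ, Fintype.card_fin, nsmul_eq_mul, s]
    field_simp
    ring
  simpa using hopen.add_mem_of_mem_closure hconv hcone (hH _ hdiff) (hcone s hs 1 h1)

theorem stmt1_general (n : ℕ) (Γ : Set (Fin n → ℝ))
    (hopen : IsOpen Γ) (hconv : Convex ℝ Γ)
    (hsym : ∀ σ : Equiv.Perm (Fin n), ∀ x ∈ Γ, x ∘ σ ∈ Γ)
    (hcone : ∀ s : ℝ, 0 < s → ∀ x ∈ Γ, s • x ∈ Γ)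
    (hlow : GammaK n n ⊆ Γ) (hup : Γ ⊆ GammaK n 1) (hne : Γ ≠ GammaK n 1)
    (t : ℝ) (ht0 : 0 ≤ t) (ht1 : t < 1) :
    frontier {x | lamT n t x ∈ Γ} ∩ closure Γ = {0} := by
  have h1 : (1 : Fin n → ℝ) ∈ Γ := hlow (one_mem_GammaK le_rfl)
  let C : PointedCone ℝ (Fin n → ℝ) := (hconv.toConvexCone hcone).closure.toPointedCone
    (zero_mem_closure_of_smul_mem hcone ⟨1, h1⟩)
  have hCperm : ∀ σ : Equiv.Perm (Fin n), ∀ x ∈ C, x ∘ σ ∈ C := fun σ x hx =>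
    map_mem_closure (f := fun y => y ∘ σ) (by fun_prop) hx (hsym σ)
  have hsum_nonneg : ∀ x ∈ closure Γ, 0 ≤ ∑ i, x i :=
    closure_minimal (fun y hy => (mem_GammaK_one.1 (hup hy)).le)
      (isClosed_le continuous_const (continuous_finsetSum _ fun i _ => continuous_apply i))
  have hsum_pos : ∀ x ∈ closure Γ, x ≠ 0 → 0 < ∑ i, x i := fun x hx hx0 =>
    (hsum_nonneg x hx).lt_of_ne' fun hsum => hne <| hup.antisymm <|
      GammaK_one_subset_of_hyperplane_subset_closure hopen hconv hcone h1 fun _ =>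
        C.mem_of_sum_eq_zero hCperm hx hx0 hsum
  have hlam : ∀ x ∈ closure Γ, x ≠ 0 → lamT n t x ∈ Γ := fun x hx hx0 => by
    rw [lamT_eq]
    exact hopen.add_mem_of_mem_closure hconv hcone (C.smul_mem ht0 hx)
      (hcone _ (mul_pos (sub_pos.2 ht1) (hsum_pos x hx hx0)) 1 h1)
  have h0 : (0 : Fin n → ℝ) ∉ Γ := fun h => by simpa [mem_GammaK_one] using hup h
  have hS : IsOpen {x | lamT n t x ∈ Γ} := hopen.preimage (continuous_lamT n t)
  rw [hS.frontier_eq]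
  ext x
  constructor
  · rintro ⟨⟨-, hxS⟩, hx⟩
    by_contra hx0
    exact hxS (hlam x hx hx0)
  · rintro rfl
    refine ⟨⟨closure_mono (fun y hy => hlam y (subset_closure hy) ?_) C.zero_mem, ?_⟩, C.zero_mem⟩
    · rintro rfl; exact h0 hy
    · simpa [lamT_eq] using h0

theorem stmt1 (n : ℕ) (hn : 3 ≤ n) (Γ : Set (Fin n → ℝ))
    (hopen : IsOpen Γ) (hconv : Convex ℝ Γ)
    (hsym : ∀ σ : Equiv.Perm (Fin n), ∀ x ∈ Γ, x ∘ σ ∈ Γ)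
    (hcone : ∀ s : ℝ, 0 < s → ∀ x ∈ Γ, s • x ∈ Γ)
    (hlow : GammaK n n ⊆ Γ) (hup : Γ ⊆ GammaK n 1) (hne : Γ ≠ GammaK n 1)
    (t : ℝ) (ht0 : 0 ≤ t) (ht1 : t < 1) :
    frontier {x | lamT n t x ∈ Γ} ∩ closure Γ = {0} :=
  stmt1_general n Γ hopen hconv hsym hcone hlow hup hne t ht0 ht1
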